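/- Abstract version of Lemma 2.24: Let ⟨Mₙ⟩ be a sequence of transitive sets and ⟨λₙ⟩ an increasing sequence of p.r. closed ordinals with λₘ > On ∩ Mₘ, such that for all i, j there is m > i, j with M_i, M_j ∈ L_{λₘ}[Mₘ]. Let D = {dₙ} be reals and define h ≤_Δ g iff ∃m, h ∈ L_{λₘ}[Mₘ, g]. Suppose f is a real such that for every k, (f, dₖ) is λₖ-Mₖ-minimal over dₖ (i.e., dₖ <_{λₖ,Mₖ} (f,dₖ), and any h with dₖ <_{λₖ,Mₖ} h ≤_{λₖ,Mₖ} (f,dₖ) satisfies (f,dₖ) ≤_{λₖ,Mₖ} h), and dₙ <_Δ f for all n. Then f is Δ-minimal over D: for any h with dₙ <_Δ h for all n and h ≤_Δ f, we have f ≤_Δ h. -/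
import Mathlib


/-- Recursive join `x ⊕ z`. -/
def RecJoin (x z : ℕ → ℕ) : ℕ → ℕ := fun n => if n % 2 = 0 then x (n / 2) else z (n / 2)

/-- Every real is the recursive join of its even and odd parts. -/
lemma recJoin_halves (g : ℕ → ℕ) :
    g = RecJoin (fun n => g (2 * n)) (fun n => g (2 * n + 1)) := by
  funext n
  unfold RecJoin
  rcases Nat.even_or_odd n with ⟨k, hk⟩ | ⟨k, hk⟩ <;> subst hk
  · have h1 : (k + k) % 2 = 0 := by omega
    have h2 : (k + k) / 2 = k := by omega
    simp [h1, h2]; congr 1; omega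
  · have h1 : (2 * k + 1) % 2 = 1 := by omega
    have h2 : (2 * k + 1) / 2 = k := by omega
    simp [h1, h2]

/-- abstract Lemma 2.24: `Lv m g` abstracts the level `L_{λₘ}[Mₘ,g]` of the
relativized constructible hierarchy; `h ≤_Δ g ↔ ∃ m, h ∈ Lv m g`. If for each `k` the join
`(f,dₖ)` is `λₖ-Mₖ`-minimal over `dₖ`, and `dₙ <_Δ f` for all `n`, then `f` is `Δ`-minimal
over `D = {dₙ}`. -/
theorem abstract_friedman_minimality
    (Lv : ℕ → (ℕ → ℕ) → Set (ℕ → ℕ)) (d : ℕ → (ℕ → ℕ)) (f : ℕ → ℕ)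
    -- any two levels are absorbed into a single larger level
    (hdir : ∀ i j, ∃ m, i < m ∧ j < m ∧ ∀ g, Lv i g ⊆ Lv m g ∧ Lv j g ⊆ Lv m g)
    -- p.r.-closed absorption in the real parameter
    (habs : ∀ m g h, g ∈ Lv m h → Lv m g ⊆ Lv m h)
    -- each level contains the halves of a join and is closed under joins
    (hhalves : ∀ m x y, x ∈ Lv m (RecJoin x y) ∧ y ∈ Lv m (RecJoin x y))
    (hjoin : ∀ m x y g, x ∈ Lv m g → y ∈ Lv m g → RecJoin x y ∈ Lv m g)
    -- for every k, (f, dₖ) is λₖ-Mₖ-minimal over dₖ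
    (hstrict : ∀ k, RecJoin f (d k) ∉ Lv k (d k))
    (hmin : ∀ k h, d k ∈ Lv k h → h ∉ Lv k (d k) → h ∈ Lv k (RecJoin f (d k)) →
      RecJoin f (d k) ∈ Lv k h)
    -- dₙ <_Δ f for all n
    (hlt : ∀ n, (∃ m, d n ∈ Lv m f) ∧ ¬ ∃ m, f ∈ Lv m (d n)) :
    ∀ h, (∀ n, (∃ m, d n ∈ Lv m h) ∧ ¬ ∃ m, h ∈ Lv m (d n)) →
      (∃ m, h ∈ Lv m f) → ∃ m, f ∈ Lv m h := by
  -- reflexivity: every real lies in its own level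
  have hrefl : ∀ m g, g ∈ Lv m g := by
    intro m g
    have hg := recJoin_halves g
    have h1 := (hhalves m (fun n => g (2 * n)) (fun n => g (2 * n + 1))).1
    have h2 := (hhalves m (fun n => g (2 * n)) (fun n => g (2 * n + 1))).2
    rw [← hg] at h1 h2
    have := hjoin m (fun n => g (2 * n)) (fun n => g (2 * n + 1)) g h1 h2
    rwa [← hg] at this
  intro h hh ⟨m₀, hm₀⟩
  obtain ⟨k₁, -, -, habs₁⟩ := hdir m₀ m₀
  set D := d k₁ with hD
  set J := RecJoin f D with hJ
  set h' := RecJoin h D with hh'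
  -- h ∈ Lv k₁ J
  have hfJ : f ∈ Lv k₁ J := (hhalves k₁ f D).1
  have hDJ : D ∈ Lv k₁ J := (hhalves k₁ f D).2
  have hhk₁f : h ∈ Lv k₁ f := (habs₁ f).1 hm₀
  have hhJ : h ∈ Lv k₁ J := habs k₁ f J hfJ hhk₁f
  have hh'J : h' ∈ Lv k₁ J := hjoin k₁ h D J hhJ hDJ
  -- premises of hmin for h'
  have hDh' : D ∈ Lv k₁ h' := (hhalves k₁ h D).2
  have hh'notD : h' ∉ Lv k₁ D := by
    intro hc
    exact (hh k₁).2 ⟨k₁, habs k₁ h' D hc ((hhalves k₁ h D).1)⟩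
  have hJh' : J ∈ Lv k₁ h' := hmin k₁ h' hDh' hh'notD hh'J
  have hfh' : f ∈ Lv k₁ h' := habs k₁ J h' hJh' hfJ
  -- transfer from base h' to base h
  obtain ⟨m₂, hm₂⟩ := (hh k₁).1
  obtain ⟨k₂, -, -, habs₂⟩ := hdir k₁ m₂
  have hDh : D ∈ Lv k₂ h := (habs₂ h).2 hm₂
  have hh'h : h' ∈ Lv k₂ h := hjoin k₂ h D h (hrefl k₂ h) hDh
  exact ⟨k₂, habs k₂ h' h hh'h ((habs₂ h').1 hfh')⟩
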